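/- arXiv:1105.0743 — 2 statements merged into one kernel-verified Lean document; each statement's English description precedes it below -/
import Mathlib

section
/- The set of numbers of the form b - a + ∑_{k=1}^∞ (δ_k - ε_k)/(k(k+1)), where a,b ∈ {0,1} and δ_k, ε_k ∈ {0,1} with ∑(δ_k+ε_k) < ∞, is dense in the interval [-2,2]. -/
noncomputable def FSterm (k : ℕ) : ℝ := 1 / (((k : ℝ) + 1) * ((k : ℝ) + 2))

lemma FSterm_eq (k : ℕ) : FSterm k = 1 / ((k : ℝ) + 1) - 1 / ((k : ℝ) + 2) := by
  have h1 : ((k : ℝ) + 1) ≠ 0 := by positivity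
  have h2 : ((k : ℝ) + 2) ≠ 0 := by positivity
  unfold FSterm; field_simp; ring

lemma FSterm_pos (k : ℕ) : 0 < FSterm k := by unfold FSterm; positivity

lemma FSterm_le (k : ℕ) : FSterm k ≤ 1 / ((k : ℝ) + 2) := by
  unfold FSterm
  rw [div_le_div_iff₀ (by positivity) (by positivity)]
  nlinarith [Nat.cast_nonneg (α := ℝ) k]

noncomputable def FSgs (t : ℝ) : ℕ → ℝ
  | 0 => 0
  | (M+1) => FSgs t M + if FSgs t M + FSterm M ≤ t then FSterm M else 0

lemma FSgs_nonneg (t : ℝ) (M : ℕ) : 0 ≤ FSgs t M := by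
  induction M with
  | zero => simp [FSgs]
  | succ M ih =>
    simp only [FSgs]
    split <;> [linarith [FSterm_pos M]; linarith]

lemma FSgs_key (t : ℝ) (h0 : 0 ≤ t) (h1 : t ≤ 1) (M : ℕ) :
    FSgs t M ≤ t ∧ t - FSgs t M ≤ 1 / ((M : ℝ) + 1) := by
  induction M with
  | zero =>
    constructor
    · simpa [FSgs] using h0
    · simp only [FSgs]
      norm_num
      linarith
  | succ M ih =>
    obtain ⟨ihs, ihe⟩ := ih
    have hterm := FSterm_eq M
    have hle := FSterm_le M
    have hcast : ((M : ℝ) + 1 + 1) = (M : ℝ) + 2 := by ring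
    simp only [FSgs]
    by_cases h : FSgs t M + FSterm M ≤ t
    · rw [if_pos h]
      constructor
      · linarith
      · push_cast
        rw [hcast]
        linarith
    · rw [if_neg h]
      push_neg at h
      constructor
      · linarith
      · push_cast
        rw [hcast]
        linarith

lemma FSgs_sum (t : ℝ) (N : ℕ) :
    ∑ k ∈ Finset.range N, (if FSgs t k + FSterm k ≤ t then FSterm k else 0) = FSgs t N := by
  induction N with
  | zero => simp [FSgs]
  | succ N ih => rw [Finset.sum_range_succ, ih]; rfl

/-- The approximating coefficient function. -/
noncomputable def FSdel (t : ℝ) (N : ℕ) (k : ℕ) : ℝ :=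
  if k < N ∧ FSgs t k + FSterm k ≤ t then 1 else 0

lemma FSdel_01 (t : ℝ) (N k : ℕ) : FSdel t N k = 0 ∨ FSdel t N k = 1 := by
  unfold FSdel; split <;> simp

lemma FSdel_supp (t : ℝ) (N : ℕ) : (Function.support (FSdel t N)).Finite := by
  apply Set.Finite.subset (Finset.range N).finite_toSet
  intro k hk
  simp only [Function.mem_support, FSdel] at hk
  by_contra h
  simp only [Finset.coe_range, Set.mem_Iio] at h
  exact hk (by rw [if_neg (by tauto)])

lemma FSdel_tsum (t : ℝ) (N : ℕ) :
    ∑' k : ℕ, FSdel t N k * FSterm k = FSgs t N := by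
  rw [tsum_eq_sum (s := Finset.range N)]
  · rw [← FSgs_sum t N]
    apply Finset.sum_congr rfl
    intro k hk
    simp only [Finset.mem_range] at hk
    unfold FSdel
    by_cases h : FSgs t k + FSterm k ≤ t
    · rw [if_pos ⟨hk, h⟩, if_pos h, one_mul]
    · rw [if_neg (by tauto), if_neg h, zero_mul]
  · intro k hk
    simp only [Finset.mem_range, not_lt] at hk
    unfold FSdel
    rw [if_neg (by omega), zero_mul]

/-- The set of numbers of the form b - a + ∑_{k=1}^∞ (δ_k - ε_k)/(k(k+1)),
    with a, b ∈ {0,1} and δ_k, ε_k ∈ {0,1} finitely supported, is dense in [-2,2].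
    (Here `k : ℕ` encodes the index `k+1 ≥ 1`.) -/
theorem eigenvalues_FS_dense_in_Icc :
    Set.Icc (-2 : ℝ) 2 ⊆ closure
      {x : ℝ | ∃ (a b : ℝ) (δ ε : ℕ → ℝ),
        (a = 0 ∨ a = 1) ∧ (b = 0 ∨ b = 1) ∧
        (∀ k, δ k = 0 ∨ δ k = 1) ∧ (∀ k, ε k = 0 ∨ ε k = 1) ∧
        (Function.support δ).Finite ∧ (Function.support ε).Finite ∧
        x = b - a + ∑' k : ℕ, (δ k - ε k) / ((k + 1) * (k + 2))} := by
  intro x hx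
  obtain ⟨hx1, hx2⟩ := hx
  rw [Metric.mem_closure_iff]
  intro η hη
  -- choose a, b
  set c : ℝ := if x ≤ -1 then -1 else if 1 ≤ x then 1 else 0 with hc
  set t : ℝ := x - c with ht
  have htb : -1 ≤ t ∧ t ≤ 1 := by
    rw [ht, hc]
    split
    · constructor <;> [linarith; linarith [(by assumption : x ≤ -1)]]
    · split
      · constructor <;> linarith [(by assumption : (1:ℝ) ≤ x)]
      · push_neg at *; constructor <;> linarith
  set tp : ℝ := max t 0 with htp
  set tm : ℝ := max (-t) 0 with htm
  have htp0 : 0 ≤ tp := le_max_right _ _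
  have htm0 : 0 ≤ tm := le_max_right _ _
  have htp1 : tp ≤ 1 := max_le htb.2 (by norm_num)
  have htm1 : tm ≤ 1 := max_le (by linarith [htb.1]) (by norm_num)
  have htsplit : t = tp - tm := by
    rw [htp, htm]
    rcases le_total t 0 with h | h
    · rw [max_eq_right h, max_eq_left (by linarith)]; ring
    · rw [max_eq_left h, max_eq_right (by linarith)]; ring
  -- choose N large
  obtain ⟨N, hN⟩ := exists_nat_gt (2 / η)
  have hNpos : 0 < (N : ℝ) + 1 := by positivity
  have hNerr : 2 / ((N : ℝ) + 1) < η := by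
    rw [div_lt_iff₀ hNpos]
    have h2 : 2 / η < (N : ℝ) := hN
    rw [div_lt_iff₀ hη] at h2
    nlinarith
  refine ⟨c + FSgs tp N - FSgs tm N, ?_, ?_⟩
  · -- membership
    refine ⟨if x ≤ -1 then 1 else 0, if x ≤ -1 then 0 else if 1 ≤ x then 1 else 0,
      FSdel tp N, FSdel tm N, ?_, ?_, FSdel_01 tp N, FSdel_01 tm N,
      FSdel_supp tp N, FSdel_supp tm N, ?_⟩
    · split <;> simp
    · split <;> [simp; (split <;> simp)]
    · have : ∑' k : ℕ, (FSdel tp N k - FSdel tm N k) / (((k : ℝ) + 1) * ((k : ℝ) + 2))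
          = FSgs tp N - FSgs tm N := by
        rw [tsum_eq_sum (s := Finset.range N) (by
          intro k hk
          simp only [Finset.mem_range, not_lt] at hk
          unfold FSdel
          rw [if_neg (by omega), if_neg (by omega), sub_self, zero_div])]
        have hcongr : ∀ k ∈ Finset.range N,
            (FSdel tp N k - FSdel tm N k) / (((k : ℝ) + 1) * ((k : ℝ) + 2))
            = (if FSgs tp k + FSterm k ≤ tp then FSterm k else 0)
              - (if FSgs tm k + FSterm k ≤ tm then FSterm k else 0) := by
          intro k hk
          simp only [Finset.mem_range] at hk
          unfold FSdel
          rw [sub_div]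
          congr 1
          · by_cases h : FSgs tp k + FSterm k ≤ tp
            · rw [if_pos ⟨hk, h⟩, if_pos h]; unfold FSterm; rw [one_div]
            · rw [if_neg (by tauto), if_neg h, zero_div]
          · by_cases h : FSgs tm k + FSterm k ≤ tm
            · rw [if_pos ⟨hk, h⟩, if_pos h]; unfold FSterm; rw [one_div]
            · rw [if_neg (by tauto), if_neg h, zero_div]
        rw [Finset.sum_congr rfl hcongr, Finset.sum_sub_distrib, FSgs_sum, FSgs_sum]
      push_cast
      rw [this]
      rw [hc]
      split <;> [ring; (split <;> ring)]
  · -- distance estimate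
    have h1 := FSgs_key tp htp0 htp1 N
    have h2 := FSgs_key tm htm0 htm1 N
    have h1' := (FSgs_key tp htp0 htp1 N).1
    have h2' := (FSgs_key tm htm0 htm1 N).1
    have hxeq : x = c + tp - tm := by
      have h1 : t = x - c := ht
      linarith [htsplit]
    rw [Real.dist_eq, hxeq]
    have : c + tp - tm - (c + FSgs tp N - FSgs tm N)
        = (tp - FSgs tp N) - (tm - FSgs tm N) := by ring
    rw [this]
    have h2N : 2 / ((N : ℝ) + 1) = 1 / ((N : ℝ) + 1) + 1 / ((N : ℝ) + 1) := by ring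
    have hp : (0:ℝ) < 1 / ((N : ℝ) + 1) := by positivity
    rw [abs_sub_lt_iff]
    constructor <;> linarith [h1.2, h2.2]
end

section
/- Let ρ be a fixed smooth real function, let ρ₊(ξ₊) and ρ₋(ξ₋) be the smooth real functions given by ρ₊(ξ) = ρ(ξ) and ρ₋(ξ) = ρ(-ξ), and set φ(ξ₊,ξ₋) = -ln sin²(∫_{-ξ₋}^{ξ₊} ρ(η) dη) wherever the sine is nonzero. Then φ satisfies ∂₊∂₋φ = 2ρ₊ρ₋ e^φ. -/
open Real intervalIntegral

/-- With ρ smooth, I(ξ) = ∫₀^ξ ρ and φ(ξ₊,ξ₋) = -ln sin²(I(ξ₊) - I(-ξ₋)),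
    the function φ satisfies ∂₊∂₋φ = 2ρ₊ρ₋e^φ (with ρ₊(ξ) = ρ(ξ),
    ρ₋(ξ) = ρ(-ξ)) wherever the sine is nonzero. -/
theorem liouville_type_solution (ρ : ℝ → ℝ) (hρ : ContDiff ℝ (⊤ : ℕ∞) ρ) :
    let I : ℝ → ℝ := fun ξ => ∫ η in (0 : ℝ)..ξ, ρ η
    let φ : ℝ → ℝ → ℝ := fun u v => -Real.log ((Real.sin (I u - I (-v))) ^ 2)
    ∀ u v : ℝ, Real.sin (I u - I (-v)) ≠ 0 →
      deriv (fun v' => deriv (fun u' => φ u' v') u) v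
        = 2 * ρ u * ρ (-v) * Real.exp (φ u v) := by
  intro I φ u v hsin
  have hρc : Continuous ρ := hρ.continuous
  have hI : ∀ x : ℝ, HasDerivAt I (ρ x) x := fun x =>
    intervalIntegral.integral_hasDerivAt_right (hρc.intervalIntegrable 0 x)
      (hρc.stronglyMeasurableAtFilter _ _) hρc.continuousAt
  have hIc : Continuous I := by
    rw [continuous_iff_continuousAt]; exact fun x => (hI x).continuousAt
  have hθ : ∀ v' : ℝ, HasDerivAt (fun w => I u - I (-w)) (ρ (-v')) v' := by
    intro v'
    have h1 : HasDerivAt (fun w : ℝ => I (-w)) (ρ (-v') * (-1)) v' :=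
      (hI (-v')).comp v' (hasDerivAt_neg v')
    exact ((hasDerivAt_const v' (I u)).sub h1).congr_deriv (by ring)
  -- inner derivative formula
  have hinner : ∀ v' : ℝ, Real.sin (I u - I (-v')) ≠ 0 →
      deriv (fun u' => φ u' v') u
        = -(2 * ρ u * Real.cos (I u - I (-v')) / Real.sin (I u - I (-v'))) := by
    intro v' hs
    have hθu : HasDerivAt (fun u' => I u' - I (-v')) (ρ u) u := by
      simpa using (hI u).sub_const (I (-v'))
    have hsinu : HasDerivAt (fun u' => Real.sin (I u' - I (-v')))
        (Real.cos (I u - I (-v')) * ρ u) u := (Real.hasDerivAt_sin _).comp u hθu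
    have hsq := hsinu.pow 2
    have hlog := (hsq.log (pow_ne_zero 2 hs)).neg
    have := hlog.deriv
    rw [show deriv (fun u' => φ u' v') u = _ from this]
    simp only [Pi.pow_apply]
    have h1 : Real.sin (I u - I (-v')) ^ 2 ≠ 0 := pow_ne_zero 2 hs
    field_simp
    ring
  -- the inner derivative agrees with the nice formula near v
  have hopen : IsOpen {v' : ℝ | Real.sin (I u - I (-v')) ≠ 0} := by
    have hc : Continuous fun v' : ℝ => Real.sin (I u - I (-v')) :=
      Real.continuous_sin.comp (continuous_const.sub (hIc.comp continuous_neg))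
    exact isOpen_compl_singleton.preimage hc
  have hev : (fun v' => deriv (fun u' => φ u' v') u) =ᶠ[nhds v]
      (fun v' => -(2 * ρ u * Real.cos (I u - I (-v')) / Real.sin (I u - I (-v')))) := by
    filter_upwards [hopen.mem_nhds hsin] with v' hv' using hinner v' hv'
  rw [hev.deriv_eq]
  simp only [mul_div_assoc]
  -- derivative of the nice formula
  set θ := I u - I (-v) with hθdef
  have hcosv : HasDerivAt (fun v' => Real.cos (I u - I (-v'))) (-Real.sin θ * ρ (-v)) v :=
    HasDerivAt.comp (h₂ := Real.cos) v (Real.hasDerivAt_cos θ) (hθ v)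
  have hsinv : HasDerivAt (fun v' => Real.sin (I u - I (-v'))) (Real.cos θ * ρ (-v)) v :=
    HasDerivAt.comp (h₂ := Real.sin) v (Real.hasDerivAt_sin θ) (hθ v)
  have hdiv := ((hcosv.div hsinv hsin).const_mul (2 * ρ u)).neg
  rw [show deriv (fun v' => -(2 * ρ u * (Real.cos (I u - I (-v')) / Real.sin (I u - I (-v'))))) v = _ from hdiv.deriv, ← hθdef]
  have hexp : Real.exp (φ u v) = (Real.sin θ ^ 2)⁻¹ := by
    show Real.exp (-Real.log (Real.sin θ ^ 2)) = _
    rw [Real.exp_neg, Real.exp_log]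
    exact lt_of_le_of_ne (sq_nonneg _) (Ne.symm (pow_ne_zero 2 hsin))
  rw [hexp]
  have hpy := Real.sin_sq_add_cos_sq θ
  have hs2 : Real.sin θ ^ 2 ≠ 0 := pow_ne_zero 2 hsin
  field_simp
  linear_combination (ρ u * ρ (-v)) * hpy
end
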